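/- arXiv:2401.06729 — 6 statements merged into one kernel-verified Lean document; each statement's English description precedes it below -/
import Mathlib

section
/- Let k be an odd natural number and N a natural number with k ≤ N. Then the maximum of λ_{N,k}(m) over m ∈ {0,1,...,N} equals C(N,k) (attained at m = N), and the minimum equals −C(N,k) (attained at m = 0), where λ_{N,k}(m) := ∑_{i=0}^{k} (−1)^i · C(N−m,i) · C(m,k−i). -/
/-- The eigenvalue `λ_{N,k}(m)` of the `k`-body Ising Hamiltonian on a basis state
with `m` spins up. -/
def isingEigenvalue (N k m : ℕ) : ℤ :=
  ∑ i ∈ Finset.range (k + 1), (-1 : ℤ) ^ i * ((N - m).choose i) * (m.choose (k - i))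

/-! Dropping the signs turns `λ_{N,k}(m)` into Vandermonde's sum for `C((N - m) + m, k)`,
so `|λ_{N,k}(m)| ≤ C(N,k)`. The bound is attained at `m = N`, where only the term `i = 0`
survives, and at `m = 0`, where only `i = k` survives, with sign `(-1)^k = -1`. -/

theorem Nat.sum_range_choose_mul_choose (a b k : ℕ) :
    ∑ i ∈ Finset.range (k + 1), a.choose i * b.choose (k - i) = (a + b).choose k := by
  rw [Nat.add_choose_eq, Finset.Nat.sum_antidiagonal_eq_sum_range_succ_mk]

theorem abs_sum_range_neg_one_pow_mul_choose_mul_choose_le (a b k : ℕ) :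
    |∑ i ∈ Finset.range (k + 1), (-1 : ℤ) ^ i * a.choose i * b.choose (k - i)|
      ≤ (a + b).choose k := by
  calc |∑ i ∈ Finset.range (k + 1), (-1 : ℤ) ^ i * a.choose i * b.choose (k - i)|
      ≤ ∑ i ∈ Finset.range (k + 1), |(-1 : ℤ) ^ i * a.choose i * b.choose (k - i)| :=
        Finset.abs_sum_le_sum_abs _ _
    _ = ∑ i ∈ Finset.range (k + 1), (a.choose i * b.choose (k - i) : ℤ) := by
        simp only [abs_mul, abs_pow, abs_neg, abs_one, one_pow, one_mul, Nat.abs_cast]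
    _ = (a + b).choose k := mod_cast Nat.sum_range_choose_mul_choose a b k

theorem abs_isingEigenvalue_le {N m : ℕ} (k : ℕ) (hm : m ≤ N) :
    |isingEigenvalue N k m| ≤ N.choose k := by
  simpa only [isingEigenvalue, Nat.sub_add_cancel hm] using
    abs_sum_range_neg_one_pow_mul_choose_mul_choose_le (N - m) m k

theorem isingEigenvalue_self (N k : ℕ) : isingEigenvalue N k N = N.choose k := by
  rw [isingEigenvalue, Finset.sum_eq_single_of_mem 0 (by simp)]
  · simp
  · intro i _ hi
    simp [Nat.choose_eq_zero_of_lt (Nat.pos_of_ne_zero hi)]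

theorem isingEigenvalue_zero (N k : ℕ) : isingEigenvalue N k 0 = (-1) ^ k * N.choose k := by
  rw [isingEigenvalue, Finset.sum_eq_single_of_mem k (by simp)]
  · simp
  · intro i hi hik
    have hik : i < k := lt_of_le_of_ne (Finset.mem_range_succ_iff.mp hi) hik
    simp [Nat.choose_eq_zero_of_lt (Nat.sub_pos_of_lt hik)]

theorem isingEigenvalue_odd_max_min_general (N k : ℕ) (hk : Odd k) :
    IsGreatest ((fun m => isingEigenvalue N k m) '' Set.Iic N) (N.choose k : ℤ) ∧
    IsLeast ((fun m => isingEigenvalue N k m) '' Set.Iic N) (-(N.choose k : ℤ)) ∧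
    isingEigenvalue N k N = (N.choose k : ℤ) ∧
    isingEigenvalue N k 0 = -(N.choose k : ℤ) := by
  have h_zero : isingEigenvalue N k 0 = -(N.choose k : ℤ) := by
    rw [isingEigenvalue_zero, hk.neg_one_pow, neg_one_mul]
  refine ⟨⟨⟨N, Set.mem_Iic.mpr le_rfl, isingEigenvalue_self N k⟩, ?_⟩,
    ⟨⟨0, Set.mem_Iic.mpr (Nat.zero_le N), h_zero⟩, ?_⟩, isingEigenvalue_self N k, h_zero⟩
  · rintro _ ⟨m, hm, rfl⟩
    exact le_of_abs_le (abs_isingEigenvalue_le k hm)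
  · rintro _ ⟨m, hm, rfl⟩
    exact neg_le_of_abs_le (abs_isingEigenvalue_le k hm)

/-- For odd `k ≤ N`, the maximum of `λ_{N,k}(m)` over `m ∈ {0,…,N}` is `C(N,k)`,
attained at `m = N`, and the minimum is `-C(N,k)`, attained at `m = 0`. -/
theorem isingEigenvalue_odd_max_min (N k : ℕ) (hk : Odd k) (hkN : k ≤ N) :
    IsGreatest ((fun m => isingEigenvalue N k m) '' Set.Iic N) (N.choose k : ℤ) ∧
    IsLeast ((fun m => isingEigenvalue N k m) '' Set.Iic N) (-(N.choose k : ℤ)) ∧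
    isingEigenvalue N k N = (N.choose k : ℤ) ∧
    isingEigenvalue N k 0 = -(N.choose k : ℤ) :=
  isingEigenvalue_odd_max_min_general N k hk
end

section
/- For all natural numbers N and all m ≤ N, 2 · ∑_{i=0}^{2} (−1)^i · C(N−m,i) · C(m,2−i) = (N − 2m)^2 − N, as an identity of integers (with N − 2m computed in ℤ). -/
lemma two_mul_cast_choose_two (n : ℕ) : 2 * (n.choose 2 : ℤ) = n ^ 2 - n := by
  have h : (2 * n.choose 2 : ℚ) = n ^ 2 - n := by
    rw [Nat.cast_choose_two]; ring
  exact_mod_cast h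

lemma two_mul_sum_neg_one_pow_mul_choose_mul_choose_two_sub (k m : ℕ) :
    2 * ∑ i ∈ Finset.range 3, (-1 : ℤ) ^ i * (k.choose i) * (m.choose (2 - i)) =
      ((k : ℤ) - m) ^ 2 - (k + m) := by
  simp only [Finset.sum_range_succ, Finset.sum_range_zero]
  push_cast [Nat.choose_zero_right, Nat.choose_one_right]
  linear_combination two_mul_cast_choose_two m + two_mul_cast_choose_two k

/-- Twice the two-body Ising eigenvalue: `2 λ_{N,2}(m) = (N - 2m)^2 - N` in `ℤ`. -/
theorem two_mul_isingEigenvalue_two_body (N m : ℕ) (hm : m ≤ N) :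
    2 * ∑ i ∈ Finset.range 3, (-1 : ℤ) ^ i * ((N - m).choose i) * (m.choose (2 - i)) =
      ((N : ℤ) - 2 * m) ^ 2 - N := by
  obtain ⟨k, rfl⟩ := Nat.exists_eq_add_of_le hm
  rw [Nat.add_sub_cancel_left, two_mul_sum_neg_one_pow_mul_choose_mul_choose_two_sub]
  push_cast
  ring
end

section
/- Let k ≥ 1 be a natural number and define the integer polynomial f_k(X) = k·X^{k+4} − 2·X^{k+3} − (k+2)·X^{k+2} + (k+2)·X^3 + 2·X^2 − k·X. Then (X−1)^3 divides f_k but (X−1)^4 does not divide f_k; equivalently f_k(1) = f_k'(1) = f_k''(1) = 0 while f_k'''(1) ≠ 0. -/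
/-!
Over a domain of characteristic zero the multiplicity of a root `t` is the index of the first
iterated derivative that does not vanish at `t`. At `t = 1` the iterated derivatives of `f_k` are
explicit sums of descending factorials; the first three vanish and the third is
`2k(k + 1)(k + 2)`, which is nonzero for `k ≥ 1`.
-/

open Polynomial

/-- The numerator polynomial of the stationarity condition for the continuum eigenvalue
function of the `k`-body Ising Hamiltonian. -/
noncomputable def stationarityPoly (k : ℕ) : Polynomial ℤ :=
  (k : Polynomial ℤ) * X ^ (k + 4) - 2 * X ^ (k + 3) - ((k : Polynomial ℤ) + 2) * X ^ (k + 2)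
    + ((k : Polynomial ℤ) + 2) * X ^ 3 + 2 * X ^ 2 - (k : Polynomial ℤ) * X

namespace Polynomial

theorem rootMultiplicity_eq_of_eval_iterate_derivative {R : Type*} [CommRing R] [IsDomain R]
    [CharZero R] {p : R[X]} {t : R} {n : ℕ}
    (hlt : ∀ m < n, (derivative^[m] p).eval t = 0) (hn : (derivative^[n] p).eval t ≠ 0) :
    p.rootMultiplicity t = n := by
  have hp : p ≠ 0 := by
    rintro rfl
    simp at hn
  refine le_antisymm (not_lt.1 fun h ↦ hn (isRoot_iterate_derivative_of_lt_rootMultiplicity h)) ?_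
  cases n with
  | zero => exact Nat.zero_le _
  | succ n => exact lt_rootMultiplicity_of_isRoot_iterate_derivative hp fun m hm ↦ hlt m (by omega)

theorem eval_one_iterate_derivative_X_pow {R : Type*} [CommRing R] (n m : ℕ) :
    (derivative^[m] (X ^ n : R[X])).eval 1 = n.descFactorial m := by
  simp [iterate_derivative_X_pow_eq_natCast_mul]

end Polynomial

theorem eval_one_iterate_derivative_stationarityPoly (k m : ℕ) :
    (derivative^[m] (stationarityPoly k)).eval 1 =
      k * (k + 4).descFactorial m - 2 * (k + 3).descFactorial m
        - (k + 2) * (k + 2).descFactorial m + (k + 2) * (3 : ℕ).descFactorial m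
        + 2 * (2 : ℕ).descFactorial m - k * (1 : ℕ).descFactorial m := by
  have hform : stationarityPoly k =
      C (k : ℤ) * X ^ (k + 4) - C 2 * X ^ (k + 3) - C ((k : ℤ) + 2) * X ^ (k + 2)
        + C ((k : ℤ) + 2) * X ^ 3 + C 2 * X ^ 2 - C (k : ℤ) * X ^ 1 := by
    simp [stationarityPoly]
  simp only [hform, iterate_map_sub, iterate_map_add, iterate_derivative_C_mul, eval_sub, eval_add,
    eval_C_mul, eval_one_iterate_derivative_X_pow]

theorem eval_one_iterate_derivative_stationarityPoly_of_lt_three (k : ℕ) {m : ℕ} (hm : m < 3) :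
    (derivative^[m] (stationarityPoly k)).eval 1 = 0 := by
  rw [eval_one_iterate_derivative_stationarityPoly]
  interval_cases m <;> simp [Nat.descFactorial] <;> ring

theorem eval_one_iterate_derivative_three_stationarityPoly (k : ℕ) :
    (derivative^[3] (stationarityPoly k)).eval 1 = 2 * k * (k + 1) * (k + 2) := by
  rw [eval_one_iterate_derivative_stationarityPoly]
  simp [Nat.descFactorial]
  ring

/-- `(X-1)^3` divides `f_k` but `(X-1)^4` does not; equivalently
`f_k(1) = f_k'(1) = f_k''(1) = 0` while `f_k'''(1) ≠ 0`. -/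
theorem stationarityPoly_triple_root (k : ℕ) (hk : 1 ≤ k) :
    ((X - 1) ^ 3 ∣ stationarityPoly k ∧ ¬ (X - 1) ^ 4 ∣ stationarityPoly k) ∧
    ((stationarityPoly k).eval 1 = 0 ∧
      (derivative (stationarityPoly k)).eval 1 = 0 ∧
      (derivative (derivative (stationarityPoly k))).eval 1 = 0 ∧
      (derivative (derivative (derivative (stationarityPoly k)))).eval 1 ≠ 0) := by
  have hlow (m : ℕ) (hm : m < 3) := eval_one_iterate_derivative_stationarityPoly_of_lt_three k hm
  have hthird : (derivative^[3] (stationarityPoly k)).eval 1 ≠ 0 := by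
    rw [eval_one_iterate_derivative_three_stationarityPoly]
    positivity
  have hmult : (stationarityPoly k).rootMultiplicity 1 = 3 :=
    rootMultiplicity_eq_of_eval_iterate_derivative hlow hthird
  have hp : stationarityPoly k ≠ 0 := by
    rintro hp
    simp [hp] at hmult
  have hdvd (n : ℕ) : (X - 1) ^ n ∣ stationarityPoly k ↔ n ≤ 3 := by
    rw [← hmult, le_rootMultiplicity_iff hp, C_1]
  exact ⟨⟨(hdvd 3).2 le_rfl, fun h ↦ absurd ((hdvd 4).1 h) (by norm_num)⟩,
    hlow 0 (by norm_num), hlow 1 (by norm_num), hlow 2 (by norm_num), hthird⟩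
end

section
/- Let k ≥ 2 be an even natural number and let f_k(y) = k·y^{k+4} − 2·y^{k+3} − (k+2)·y^{k+2} + (k+2)·y^3 + 2·y^2 − k·y. Then for every real y > 0, f_k(y) = 0 if and only if y = 1. -/
open Finset

lemma stationarity_auxA (k : ℕ) (y : ℝ) :
    y * (y - 1)^3 * ((∑ j ∈ range (k+1), (1 + 2*(j:ℝ)) * y^j) + ((k:ℝ)+1) * y^(k+1))
      = ((k:ℝ)+1)*y^(k+5) - ((k:ℝ)+2)*y^(k+4) - ((k:ℝ)+1)*y^(k+3)
        + ((k:ℝ)+2)*y^(k+2) + y^3 - y := by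
  induction k with
  | zero => norm_num [sum_range_succ]; ring
  | succ n ih =>
    rw [sum_range_succ]
    push_cast
    push_cast at ih
    linear_combination ih

lemma stationarity_auxB (k : ℕ) (y : ℝ) :
    (k:ℝ)*y^(k+4) - 2*y^(k+3) - ((k:ℝ)+2)*y^(k+2) + ((k:ℝ)+2)*y^3 + 2*y^2 - (k:ℝ)*y
      = y*(y-1)^3 * ∑ j ∈ range (k+1), ((k:ℝ) + 2*j*((k:ℝ)-j)) * y^j := by
  induction k with
  | zero => norm_num [sum_range_succ]; ring
  | succ n ih =>
    have split : ∀ j ∈ range (n+1),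
        (((n:ℝ)+1) + 2*(j:ℝ)*(((n:ℝ)+1)-(j:ℝ))) * y^j
          = ((n:ℝ) + 2*(j:ℝ)*((n:ℝ)-(j:ℝ))) * y^j + (1 + 2*(j:ℝ)) * y^j := by
      intro j _; ring
    rw [sum_range_succ]
    push_cast
    rw [Finset.sum_congr rfl split, Finset.sum_add_distrib]
    push_cast at ih
    have hA := stationarity_auxA n y
    push_cast at hA
    linear_combination ih - hA

/-- For even `k ≥ 2` and `y > 0`, the stationarity polynomial
`f_k(y) = k y^{k+4} - 2 y^{k+3} - (k+2) y^{k+2} + (k+2) y^3 + 2 y^2 - k y`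
vanishes iff `y = 1`. -/
theorem stationarityPoly_pos_root_iff_one (k : ℕ) (hk : 2 ≤ k) (hke : Even k)
    (y : ℝ) (hy : 0 < y) :
    (k : ℝ) * y ^ (k + 4) - 2 * y ^ (k + 3) - ((k : ℝ) + 2) * y ^ (k + 2)
        + ((k : ℝ) + 2) * y ^ 3 + 2 * y ^ 2 - (k : ℝ) * y = 0 ↔ y = 1 := by
  rw [stationarity_auxB]
  have hS : 0 < ∑ j ∈ range (k+1), ((k:ℝ) + 2*(j:ℝ)*((k:ℝ)-(j:ℝ))) * y^j := by
    apply Finset.sum_pos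
    · intro j hj
      have hjk : (j:ℝ) ≤ (k:ℝ) := by
        exact_mod_cast Nat.lt_succ_iff.mp (Finset.mem_range.mp hj)
      have hk2 : (2:ℝ) ≤ (k:ℝ) := by exact_mod_cast hk
      have hc : 0 < (k:ℝ) + 2*(j:ℝ)*((k:ℝ)-(j:ℝ)) := by
        have h1 : (0:ℝ) ≤ 2*(j:ℝ)*((k:ℝ)-(j:ℝ)) := by
          apply mul_nonneg
          · positivity
          · linarith
        linarith
      exact mul_pos hc (pow_pos hy j)
    · exact ⟨0, Finset.mem_range.mpr (Nat.succ_pos k)⟩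
  constructor
  · intro h
    rcases mul_eq_zero.mp h with h1 | h1
    · rcases mul_eq_zero.mp h1 with h2 | h2
      · exact absurd h2 (ne_of_gt hy)
      · have : y - 1 = 0 := by
          exact pow_eq_zero_iff (by norm_num) |>.mp h2
        linarith
    · exact absurd h1 (ne_of_gt hS)
  · intro h; subst h; ring_nf
end

section
/- Let k be a fixed even positive natural number. Then the sequence a_n = (k!)^2 · ( C(2n, k) − (−1)^{k/2} · C(n, k/2) )^2 / (2n)^{2k} (as real numbers) tends to 1 as n → ∞. -/
open Filter Finset

/-- Super-Heisenberg scaling: for fixed even `k > 0`, with `N = 2n` qubits,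
`(k!)^2 (C(2n,k) - (-1)^{k/2} C(n,k/2))^2 / (2n)^{2k} → 1` as `n → ∞`. -/
theorem superHeisenberg_scaling_even (k : ℕ) (hk : 0 < k) (hke : Even k) :
    Filter.Tendsto
      (fun n : ℕ =>
        ((k.factorial : ℝ) ^ 2 *
          (((2 * n).choose k : ℝ) - (-1) ^ (k / 2) * ((n.choose (k / 2) : ℝ))) ^ 2) /
            (2 * (n : ℝ)) ^ (2 * k))
      Filter.atTop (nhds 1) := by
  set j := k / 2 with hj
  have hjk : j < k := Nat.div_lt_self hk (by norm_num)
  have h2n : Tendsto (fun n : ℕ => 2 * (n : ℝ)) atTop atTop :=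
    tendsto_natCast_atTop_atTop.const_mul_atTop two_pos
  -- F: k! * C(2n,k) / (2n)^k → 1
  have hF : Tendsto
      (fun n : ℕ => ((k.factorial : ℝ) * ((2 * n).choose k : ℝ)) / (2 * (n : ℝ)) ^ k)
      atTop (nhds 1) := by
    have hprod : Tendsto (fun n : ℕ => ∏ i ∈ range k, ((2 * (n : ℝ) - i) / (2 * n)))
        atTop (nhds 1) := by
      have h1 : Tendsto (fun n : ℕ => ∏ i ∈ range k, ((2 * (n : ℝ) - i) / (2 * n)))
          atTop (nhds (∏ _i ∈ range k, (1 : ℝ))) := by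
        refine tendsto_finset_prod _ (fun i _ => ?_)
        have : Tendsto (fun n : ℕ => (i : ℝ) / (2 * n)) atTop (nhds 0) :=
          tendsto_const_nhds.div_atTop h2n
        have h2 := (tendsto_const_nhds (x := (1:ℝ)) (f := atTop)).sub this
        rw [sub_zero] at h2
        refine h2.congr' ?_
        filter_upwards [h2n.eventually_gt_atTop 0] with n hn
        rw [sub_div, div_self hn.ne']
      simpa using h1
    refine hprod.congr' ?_
    filter_upwards [eventually_ge_atTop k] with n hn
    have hle : k ≤ 2 * n := le_trans hn (by omega)
    have hcast : ((k.factorial : ℝ) * ((2 * n).choose k : ℝ))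
        = ∏ i ∈ range k, (2 * (n : ℝ) - i) := by
      have := Nat.descFactorial_eq_factorial_mul_choose (2 * n) k
      rw [Nat.descFactorial_eq_prod_range] at this
      have hc : ((∏ i ∈ range k, (2 * n - i) : ℕ) : ℝ)
          = ∏ i ∈ range k, (2 * (n : ℝ) - i) := by
        rw [Nat.cast_prod]
        refine Finset.prod_congr rfl (fun i hi => ?_)
        have hi' : i ≤ 2 * n := le_trans (le_of_lt (mem_range.mp hi)) hle
        push_cast [Nat.cast_sub hi']
        ring
      rw [← hc, this]
      push_cast
      ring
    rw [hcast, Finset.prod_div_distrib, Finset.prod_const, Finset.card_range]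
  -- G: k! * C(n,j) / (2n)^k → 0
  have hG : Tendsto
      (fun n : ℕ => ((k.factorial : ℝ) * ((n.choose j : ℝ))) / (2 * (n : ℝ)) ^ k)
      atTop (nhds 0) := by
    have hbound : ∀ᶠ n : ℕ in atTop,
        ((k.factorial : ℝ) * ((n.choose j : ℝ))) / (2 * (n : ℝ)) ^ k
          ≤ (k.factorial : ℝ) / (2 ^ k * n) := by
      filter_upwards [eventually_ge_atTop 1] with n hn
      have hn0 : (0:ℝ) < n := by exact_mod_cast hn
      have hch : ((n.choose j : ℝ)) ≤ (n : ℝ) ^ j := by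
        exact_mod_cast Nat.choose_le_pow n j
      have hpowle : (n : ℝ) ^ j ≤ (n : ℝ) ^ (k - 1) :=
        pow_le_pow_right₀ (by exact_mod_cast hn) (by omega)
      have hkey : ((k.factorial : ℝ) * ((n.choose j : ℝ))) * (2 ^ k * n)
          ≤ (k.factorial : ℝ) * (2 * (n : ℝ)) ^ k := by
        have : (2 * (n : ℝ)) ^ k = 2 ^ k * (n : ℝ) ^ k := by rw [mul_pow]
        rw [this]
        have hnk : (n : ℝ) ^ (k - 1) * n = (n : ℝ) ^ k := by
          rw [← pow_succ]; congr 1; omega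
        calc ((k.factorial : ℝ) * ((n.choose j : ℝ))) * (2 ^ k * n)
            ≤ ((k.factorial : ℝ) * (n : ℝ) ^ (k-1)) * (2 ^ k * n) := by
              have h1 := hch.trans hpowle
              have hfac : (0:ℝ) ≤ (k.factorial : ℝ) := by positivity
              have hP : (0:ℝ) ≤ 2 ^ k * (n : ℝ) := by positivity
              exact mul_le_mul_of_nonneg_right (mul_le_mul_of_nonneg_left h1 hfac) hP
          _ = (k.factorial : ℝ) * (2 ^ k * (n : ℝ) ^ k) := by
              rw [← hnk]; ring
      have hpos : (0:ℝ) < (2 * (n : ℝ)) ^ k := by positivity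
      have hpos2 : (0:ℝ) < 2 ^ k * (n : ℝ) := by positivity
      rw [div_le_div_iff₀ hpos hpos2]
      linarith [hkey]
    have hlim : Tendsto (fun n : ℕ => (k.factorial : ℝ) / (2 ^ k * n)) atTop (nhds 0) :=
      tendsto_const_nhds.div_atTop (tendsto_natCast_atTop_atTop.const_mul_atTop (by positivity))
    refine squeeze_zero' ?_ hbound hlim
    filter_upwards [eventually_ge_atTop 1] with n hn
    have hn0 : (0:ℝ) < n := by exact_mod_cast hn
    positivity
  -- combine
  have hcomb := ((hF.sub (hG.const_mul ((-1:ℝ) ^ j))).pow 2)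
  rw [mul_zero, sub_zero, one_pow] at hcomb
  refine hcomb.congr' ?_
  filter_upwards [eventually_ge_atTop 1] with n hn
  have hn0 : (0:ℝ) < n := by exact_mod_cast hn
  have hpos : (0:ℝ) < (2 * (n : ℝ)) ^ k := by positivity
  rw [pow_mul' ((2:ℝ) * n) 2 k]
  field_simp
end

section
/- Let δ_m, δ_M be real numbers with δ_m < 0 < δ_M and δ_M > −δ_m, and consider the five numbers 4δ_M^3, 4δ_m^3, 3δ_mδ_M^2 + δ_M^3, 3δ_m^2δ_M + δ_m^3, and 2δ_mδ_M(δ_m + δ_M). Then the maximum of these five numbers is 4δ_M^3; moreover, if δ_M < −2δ_m their minimum is 4δ_m^3, while if δ_M > −2δ_m their minimum is 2δ_mδ_M(δ_m + δ_M). -/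
/-!
Each difference between two of the five eigenvalues factors into linear forms in `δm, δM`:
`4δM³` exceeds the others by `(δM - δm)(2δM + δm)²`, `3δM²(δM - δm)` and
`2δM(δM - δm)(2δM + δm)`, while `2δmδM(δm + δM) - 4δm³ = 2δm(δM - δm)(δM + 2δm)`,
so the sign of `δM + 2δm` decides which of these two is the minimum.
-/

/-- The third elementary symmetric polynomial of the local eigenvalues `a ≤ b` over the four
parties, for the product states `|b⟩^⊗4, |a⟩^⊗4, |a⟩|b⟩^⊗3, |b⟩|a⟩^⊗3, |b⟩^⊗2|a⟩^⊗2`. -/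
def fourPartyEigenvalues (a b : ℝ) : Set ℝ :=
  {4 * b ^ 3, 4 * a ^ 3, 3 * a * b ^ 2 + b ^ 3, 3 * a ^ 2 * b + a ^ 3, 2 * a * b * (a + b)}

section

variable {a b : ℝ}

lemma four_mul_cube_le_four_mul_cube (hab : a ≤ b) : 4 * a ^ 3 ≤ 4 * b ^ 3 := by
  linear_combination 3 * mul_nonneg (sq_nonneg a) (sub_nonneg.2 hab) +
    mul_nonneg (sub_nonneg.2 hab) (sq_nonneg (2 * b + a))

lemma isGreatest_fourPartyEigenvalues (hab : a ≤ b) (hab' : -a ≤ b) :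
    IsGreatest (fourPartyEigenvalues a b) (4 * b ^ 3) := by
  have hb : 0 ≤ b := by linarith
  have h2ba : 0 ≤ 2 * b + a := by linarith
  refine ⟨by simp [fourPartyEigenvalues], ?_⟩
  simp only [fourPartyEigenvalues, upperBounds_insert, upperBounds_singleton, Set.mem_inter_iff,
    Set.mem_Ici]
  refine ⟨le_rfl, four_mul_cube_le_four_mul_cube hab, ?_, ?_, ?_⟩
  · linear_combination 3 * mul_nonneg (sq_nonneg b) (sub_nonneg.2 hab)
  · linear_combination mul_nonneg (sub_nonneg.2 hab) (sq_nonneg (2 * b + a))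
  · linear_combination 2 * mul_nonneg (mul_nonneg hb (sub_nonneg.2 hab)) h2ba

lemma isLeast_fourPartyEigenvalues_of_le_neg_two_mul (hab : a ≤ b) (hba : b ≤ -2 * a) :
    IsLeast (fourPartyEigenvalues a b) (4 * a ^ 3) := by
  have ha : 0 ≤ -a := by linarith
  have hba' : 0 ≤ -(b + 2 * a) := by linarith
  refine ⟨by simp [fourPartyEigenvalues], ?_⟩
  simp only [fourPartyEigenvalues, lowerBounds_insert, lowerBounds_singleton, Set.mem_inter_iff,
    Set.mem_Iic]
  refine ⟨four_mul_cube_le_four_mul_cube hab, le_rfl, ?_, ?_, ?_⟩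
  · linear_combination mul_nonneg (sub_nonneg.2 hab) (sq_nonneg (b + 2 * a))
  · linear_combination 3 * mul_nonneg (sq_nonneg a) (sub_nonneg.2 hab)
  · linear_combination 2 * mul_nonneg (mul_nonneg ha (sub_nonneg.2 hab)) hba'

lemma isLeast_fourPartyEigenvalues_of_neg_two_mul_le (ha : a ≤ 0) (hba : -2 * a ≤ b) :
    IsLeast (fourPartyEigenvalues a b) (2 * a * b * (a + b)) := by
  have ha' : 0 ≤ -a := by linarith
  have hb : 0 ≤ b := by linarith
  have hab : 0 ≤ b - a := by linarith
  refine ⟨by simp [fourPartyEigenvalues], ?_⟩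
  simp only [fourPartyEigenvalues, lowerBounds_insert, lowerBounds_singleton, Set.mem_inter_iff,
    Set.mem_Iic]
  refine ⟨?_, ?_, ?_, ?_, le_rfl⟩
  · linear_combination 2 * mul_nonneg (mul_nonneg hb hab) (by linarith : 0 ≤ 2 * b + a)
  · linear_combination 2 * mul_nonneg (mul_nonneg ha' hab) (by linarith : 0 ≤ b + 2 * a)
  · linear_combination mul_nonneg (mul_nonneg hb hab) (by linarith : 0 ≤ b + 2 * a)
  · linear_combination mul_nonneg (mul_nonneg ha' hab) (by linarith : 0 ≤ a + 2 * b)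

end

theorem three_body_four_party_A3_general (δm δM : ℝ) (h1 : δm < 0) (h3 : δM > -δm) :
    IsGreatest
      ({4 * δM ^ 3, 4 * δm ^ 3, 3 * δm * δM ^ 2 + δM ^ 3, 3 * δm ^ 2 * δM + δm ^ 3,
        2 * δm * δM * (δm + δM)} : Set ℝ) (4 * δM ^ 3) ∧
    (δM < -2 * δm →
      IsLeast
        ({4 * δM ^ 3, 4 * δm ^ 3, 3 * δm * δM ^ 2 + δM ^ 3, 3 * δm ^ 2 * δM + δm ^ 3,
          2 * δm * δM * (δm + δM)} : Set ℝ) (4 * δm ^ 3)) ∧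
    (δM > -2 * δm →
      IsLeast
        ({4 * δM ^ 3, 4 * δm ^ 3, 3 * δm * δM ^ 2 + δM ^ 3, 3 * δm ^ 2 * δM + δm ^ 3,
          2 * δm * δM * (δm + δM)} : Set ℝ) (2 * δm * δM * (δm + δM))) :=
  ⟨isGreatest_fourPartyEigenvalues (by linarith) h3.le,
    fun h => isLeast_fourPartyEigenvalues_of_le_neg_two_mul (by linarith) h.le,
    fun h => isLeast_fourPartyEigenvalues_of_neg_two_mul_le h1.le h.le⟩

/-- Scenario `A_3` for the three-body Hamiltonian on four parties: if `δ_m < 0 < δ_M`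
and `δ_M > -δ_m`, then among the five eigenvalues the maximum is `4δ_M^3`; moreover,
if `δ_M < -2δ_m` the minimum is `4δ_m^3`, while if `δ_M > -2δ_m` the minimum is
`2δ_mδ_M(δ_m + δ_M)`. -/
theorem three_body_four_party_A3 (δm δM : ℝ) (h1 : δm < 0) (h2 : 0 < δM) (h3 : δM > -δm) :
    IsGreatest
      ({4 * δM ^ 3, 4 * δm ^ 3, 3 * δm * δM ^ 2 + δM ^ 3, 3 * δm ^ 2 * δM + δm ^ 3,
        2 * δm * δM * (δm + δM)} : Set ℝ) (4 * δM ^ 3) ∧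
    (δM < -2 * δm →
      IsLeast
        ({4 * δM ^ 3, 4 * δm ^ 3, 3 * δm * δM ^ 2 + δM ^ 3, 3 * δm ^ 2 * δM + δm ^ 3,
          2 * δm * δM * (δm + δM)} : Set ℝ) (4 * δm ^ 3)) ∧
    (δM > -2 * δm →
      IsLeast
        ({4 * δM ^ 3, 4 * δm ^ 3, 3 * δm * δM ^ 2 + δM ^ 3, 3 * δm ^ 2 * δM + δm ^ 3,
          2 * δm * δM * (δm + δM)} : Set ℝ) (2 * δm * δM * (δm + δM))) :=
  three_body_four_party_A3_general δm δM h1 h3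
end
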